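/- The Ricci tensor of the Bergman metric of the Siegel–Jacobi disk, defined by Ric_{α\bar{β}} = -∂²(ln G)/∂z_α ∂\bar{z}_β with G(z,w) = 2kμ(1-w\bar{w})^{-3}, has only one nonzero component: Ric_{w\bar{w}} = -3/(1-w\bar{w})², and Ric_{z\bar{z}} = Ric_{z\bar{w}} = Ric_{w\bar{z}} = 0. Consequently the Siegel–Jacobi disk is not Einstein: Ric is not a scalar multiple of the metric h (since Ric_{z\bar{z}} = 0 but h_{z\bar{z}} = μ/(1-w\bar{w}) ≠ 0). -/

import Mathlib

open Complex

/-- Polarization of `ln G`, where `G(z,w) = 2kμ(1-w w̄)^{-3}` is the determinant of the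
metric of the Siegel–Jacobi disk; it depends only on `(w, w̄)`. -/
noncomputable def sjLogDet (k μ : ℝ) (w wb : ℂ) : ℂ :=
  Complex.log (2 * (k : ℂ) * (μ : ℂ) / (1 - w * wb) ^ 3)

/-!
The density `G = 2kμ(1 - w w̄)⁻³` depends on `(w, w̄)` only, so every mixed derivative involving
`z` or `z̄` vanishes, while `∂_w ln G = 3 w̄ / (1 - w w̄)` and `∂_{w̄}` of that is `3 / (1 - w w̄)²`.
An Einstein constant `c` would satisfy `0 = Ric_{z z̄} = c μ / (1 - w w̄)`, hence `c = 0`,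
contradicting `Ric_{w w̄} ≠ 0`.
-/

lemma one_sub_mul_conj_eq_ofReal (w : ℂ) :
    1 - w * starRingEnd ℂ w = ((1 - normSq w : ℝ) : ℂ) := by
  rw [mul_conj]; push_cast; ring

lemma one_sub_normSq_pos {w : ℂ} (hw : ‖w‖ < 1) : 0 < 1 - normSq w := by
  rw [normSq_eq_norm_sq]
  nlinarith [norm_nonneg w]

lemma one_sub_mul_conj_ne_zero {w : ℂ} (hw : ‖w‖ < 1) : 1 - w * starRingEnd ℂ w ≠ 0 := by
  rw [one_sub_mul_conj_eq_ofReal]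
  exact ofReal_ne_zero.mpr (one_sub_normSq_pos hw).ne'

lemma hasDerivAt_log_const_div_pow {f : ℂ → ℂ} {f' x c : ℂ} (n : ℕ)
    (hf : HasDerivAt f f' x) (hfx : f x ≠ 0) (hmem : c / f x ^ n ∈ slitPlane) :
    HasDerivAt (fun y => log (c / f y ^ n)) (-n * f' / f x) x := by
  have hc : c ≠ 0 := fun h => slitPlane_ne_zero hmem (by simp [h])
  refine (((hasDerivAt_const x c).fun_div (hf.fun_pow n) (pow_ne_zero n hfx)).clog
    hmem).congr_deriv ?_
  rcases n with _ | n
  · simp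
  · field_simp
    push_cast
    ring

-- The branch cut of `log` is harmless: `G > 0` at `w̄ = conj w`, so `G` stays off the cut nearby.
lemma deriv_sjLogDet_fst_eventuallyEq {k μ : ℝ} (hk : 0 < k) (hμ : 0 < μ) {w : ℂ}
    (hw : ‖w‖ < 1) :
    (fun wb => deriv (fun w' => sjLogDet k μ w' wb) w)
      =ᶠ[nhds (starRingEnd ℂ w)] fun wb => 3 * wb / (1 - w * wb) := by
  have hP : 0 < 1 - normSq w := one_sub_normSq_pos hw
  have hP0 : 1 - w * starRingEnd ℂ w ≠ 0 := one_sub_mul_conj_ne_zero hw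
  have hG : 2 * (k : ℂ) * μ / (1 - w * starRingEnd ℂ w) ^ 3 ∈ slitPlane := by
    rw [one_sub_mul_conj_eq_ofReal]
    exact_mod_cast ofReal_mem_slitPlane.mpr (by positivity : 0 < 2 * k * μ / (1 - normSq w) ^ 3)
  have hcont : ContinuousAt (fun wb : ℂ => 1 - w * wb) (starRingEnd ℂ w) := by fun_prop
  have hGcont : ContinuousAt (fun wb : ℂ => 2 * (k : ℂ) * μ / (1 - w * wb) ^ 3)
      (starRingEnd ℂ w) := continuousAt_const.div (hcont.pow 3) (pow_ne_zero 3 hP0)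
  filter_upwards [hcont.eventually_ne hP0,
    hGcont.eventually_mem (isOpen_slitPlane.mem_nhds hG)] with wb hwb hGwb
  have hlin : HasDerivAt (fun w' : ℂ => 1 - w' * wb) (-wb) w := by
    simpa using ((hasDerivAt_id w).mul_const wb).const_sub 1
  exact (hasDerivAt_log_const_div_pow 3 hlin hwb hGwb).deriv.trans (by push_cast; ring)

lemma hasDerivAt_mul_div_one_sub_mul (a w wb : ℂ) (h : 1 - w * wb ≠ 0) :
    HasDerivAt (fun x => a * x / (1 - w * x)) (a / (1 - w * wb) ^ 2) wb := by
  have hnum : HasDerivAt (fun x : ℂ => a * x) a wb := by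
    simpa using (hasDerivAt_id wb).const_mul a
  have hden : HasDerivAt (fun x : ℂ => 1 - w * x) (-w) wb := by
    simpa using ((hasDerivAt_id wb).const_mul w).const_sub 1
  exact (hnum.fun_div hden h).congr_deriv (by ring)

lemma not_exists_zero_eq_mul_and_eq_mul {M₀ : Type*} [MulZeroClass M₀] [NoZeroDivisors M₀]
    {a b x : M₀} (ha : a ≠ 0) (hb : b ≠ 0) : ¬ ∃ c, 0 = c * a ∧ b = c * x := by
  rintro ⟨c, hca, hcb⟩
  obtain rfl : c = 0 := (mul_eq_zero.mp hca.symm).resolve_right ha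
  exact hb (hcb.trans (zero_mul x))

/-- The Ricci tensor `Ric_{α β̄} = -∂²(ln G)/∂z_α ∂ z̄_β` of the Bergman metric of the
Siegel–Jacobi disk has only one nonzero component, `Ric_{w w̄} = -3/(1-w w̄)²`;
consequently the Siegel–Jacobi disk is not an Einstein manifold: `Ric` is not a
scalar multiple of the metric `h`. -/
theorem siegelJacobi_ricci (k μ : ℝ) (hk : 0 < k) (hμ : 0 < μ)
    (z w : ℂ) (hw : ‖w‖ < 1) :
    let P : ℂ := 1 - w * starRingEnd ℂ w
    let η : ℂ := (z + starRingEnd ℂ z * w) / P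
    let ηb : ℂ := (starRingEnd ℂ z + z * starRingEnd ℂ w) / P
    -- Ric_{z z̄} = 0 (ln G is independent of z, z̄):
    (-(deriv (fun zb : ℂ => deriv (fun _z' : ℂ => sjLogDet k μ w (starRingEnd ℂ w)) z)
        (starRingEnd ℂ z)) = 0) ∧
    -- Ric_{z w̄} = 0:
    (-(deriv (fun wb : ℂ => deriv (fun _z' : ℂ => sjLogDet k μ w wb) z)
        (starRingEnd ℂ w)) = 0) ∧
    -- Ric_{w z̄} = 0:
    (-(deriv (fun zb : ℂ => deriv (fun w' : ℂ => sjLogDet k μ w' (starRingEnd ℂ w)) w)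
        (starRingEnd ℂ z)) = 0) ∧
    -- Ric_{w w̄} = -3/(1-w w̄)²:
    (-(deriv (fun wb : ℂ => deriv (fun w' : ℂ => sjLogDet k μ w' wb) w)
        (starRingEnd ℂ w)) = -3 / P ^ 2) ∧
    -- not Einstein: no scalar `c` with `Ric = c • h`:
    ¬ ∃ c : ℂ, (0 : ℂ) = c * ((μ : ℂ) / P) ∧
        (-3 / P ^ 2 : ℂ) = c * ((μ : ℂ) * η * ηb / P + 2 * (k : ℂ) / P ^ 2) := by
  intro P η ηb
  have hP : P ≠ 0 := one_sub_mul_conj_ne_zero hw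
  refine ⟨by simp, by simp, by simp, ?_, not_exists_zero_eq_mul_and_eq_mul
    (div_ne_zero (ofReal_ne_zero.mpr hμ.ne') hP) (div_ne_zero (by norm_num) (pow_ne_zero 2 hP))⟩
  rw [(deriv_sjLogDet_fst_eventuallyEq hk hμ hw).deriv_eq,
    (hasDerivAt_mul_div_one_sub_mul 3 w _ hP).deriv, neg_div]
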